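/- arXiv:math/0701114 — 3 statements merged into one kernel-verified Lean document; each statement's English description precedes it below -/
import Mathlib

section
/- Let $V : (\mathbb{R}^k)^m \to \mathbb{R}$ be measurable, let $0 < p_j < 1$ for $j = 1, \ldots, m$, and let $c > 0$ be such that $\int |V(x_1,\ldots,x_m)| \prod_{j=1}^m |f_j(x_j)|\, dx_1\cdots dx_m \geq c \prod_{j=1}^m \|f_j\|_{L^{p_j}(\mathbb{R}^k)}$ for all measurable functions $f_j$. Then for every positive integer $N$ and all measurable sets $\mathbf{E}_1, \ldots, \mathbf{E}_m \subset (\mathbb{R}^k)^N$, $\int \prod_{i=1}^N |V(x_1^i, \ldots, x_m^i)| \prod_{j=1}^m \chi_{\mathbf{E}_j}(\mathbf{x}_j)\, d\mathbf{x}_1 \cdots d\mathbf{x}_m \geq c^N \prod_{j=1}^m |\mathbf{E}_j|^{1/p_j}$, where $\mathbf{x}_j = (x_j^1, \ldots, x_j^N) \in (\mathbb{R}^k)^N$. -/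
open MeasureTheory ENNReal

private lemma iSup_mul_iSup_mono' (f g : ℕ → ℝ≥0∞) (hf : Monotone f) (hg : Monotone g) :
    (⨆ n, f n) * ⨆ n, g n = ⨆ n, f n * g n := by
  apply le_antisymm
  · rw [ENNReal.iSup_mul]
    refine iSup_le fun n => ?_
    rw [ENNReal.mul_iSup]
    refine iSup_le fun k => ?_
    calc f n * g k ≤ f (max n k) * g (max n k) :=
          mul_le_mul' (hf (le_max_left _ _)) (hg (le_max_right _ _))
      _ ≤ ⨆ n, f n * g n := le_iSup (fun n => f n * g n) _
  · exact iSup_le fun n => mul_le_mul' (le_iSup f n) (le_iSup g n)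

private lemma prod_iSup_mono' {ι : Type*} (s : Finset ι) (a : ι → ℕ → ℝ≥0∞)
    (ha : ∀ j, Monotone (a j)) :
    ∏ j ∈ s, ⨆ n, a j n = ⨆ n, ∏ j ∈ s, a j n := by
  classical
  induction s using Finset.induction_on with
  | empty => simp
  | insert i s hi ih =>
      rw [Finset.prod_insert hi, ih,
        iSup_mul_iSup_mono' _ _ (ha i)
          (fun n n' hnn' => Finset.prod_le_prod' fun j _ => ha j hnn')]
      simp_rw [Finset.prod_insert hi]

private lemma iSup_rpow' (a : ℕ → ℝ≥0∞) {r : ℝ} (hr : 0 < r) :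
    (⨆ n, a n) ^ r = ⨆ n, a n ^ r := by
  apply le_antisymm
  · have h1 : (⨆ n, a n) ≤ (⨆ n, a n ^ r) ^ (1/r) := by
      refine iSup_le fun n => ?_
      have : a n = (a n ^ r) ^ (1/r) := by
        rw [← ENNReal.rpow_mul, mul_one_div_cancel hr.ne', ENNReal.rpow_one]
      rw [this]
      exact ENNReal.rpow_le_rpow (le_iSup (fun n => a n ^ r) n) (by positivity)
    calc (⨆ n, a n) ^ r ≤ ((⨆ n, a n ^ r) ^ (1/r)) ^ r := ENNReal.rpow_le_rpow h1 hr.le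
      _ = ⨆ n, a n ^ r := by
        rw [← ENNReal.rpow_mul, one_div_mul_cancel hr.ne', ENNReal.rpow_one]
  · exact iSup_le fun n => ENNReal.rpow_le_rpow (le_iSup _ n) hr.le

/-- Coercivity estimates for `L^p` quasi-norms (`0 < p < 1`) tensorize exactly:
the function-level lower bound with constant `c` implies the `N`-fold tensored
restricted lower bound with constant `c^N`. -/
theorem stmt_16 (k m : ℕ) (V : (Fin m → Fin k → ℝ) → ℝ) (hV : Measurable V)
    (p : Fin m → ℝ) (hp : ∀ j, 0 < p j ∧ p j < 1) (c : ℝ) (hc : 0 < c)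
    (h : ∀ f : Fin m → (Fin k → ℝ) → ℝ, (∀ j, Measurable (f j)) →
      ENNReal.ofReal c * ∏ j, (∫⁻ y : Fin k → ℝ, ENNReal.ofReal (|f j y| ^ (p j))) ^ (1 / p j)
        ≤ ∫⁻ x : Fin m → Fin k → ℝ,
            ENNReal.ofReal |V x| * ∏ j, ENNReal.ofReal |f j (x j)|) :
    ∀ (N : ℕ) (E : Fin m → Set (Fin N → Fin k → ℝ)), (∀ j, MeasurableSet (E j)) →
      (ENNReal.ofReal c) ^ N * ∏ j, (volume (E j)) ^ (1 / p j)
        ≤ ∫⁻ x : Fin m → Fin N → Fin k → ℝ,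
            (∏ i, ENNReal.ofReal |V (fun j => x j i)|)
              * ∏ j, (E j).indicator (fun _ => (1 : ℝ≥0∞)) (x j) := by
  classical
  have key : ∀ (N : ℕ) (E : Fin m → Set (Fin N → Fin k → ℝ)), (∀ j, MeasurableSet (E j)) →
      (∀ j, volume (E j) ≠ ∞) →
      (ENNReal.ofReal c) ^ N * ∏ j, (volume (E j)) ^ (1 / p j)
        ≤ ∫⁻ x : Fin m → Fin N → Fin k → ℝ,
            (∏ i, ENNReal.ofReal |V (fun j => x j i)|)
              * ∏ j, (E j).indicator (fun _ => (1 : ℝ≥0∞)) (x j) := by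
    intro N
    induction N with
    | zero =>
        intro E hE hfin
        have hvol1 : (volume (Set.univ : Set (Fin m → Fin 0 → Fin k → ℝ))) = 1 := by
          rw [volume_pi, Measure.pi_univ]
          simp [volume_pi, Measure.pi_univ]
        have hint : (∫⁻ x : Fin m → Fin 0 → Fin k → ℝ,
            (∏ i, ENNReal.ofReal |V (fun j => x j i)|)
              * ∏ j, (E j).indicator (fun _ => (1 : ℝ≥0∞)) (x j))
            = ∏ j, (E j).indicator (fun _ => (1 : ℝ≥0∞)) default := by
          have : ∀ x : Fin m → Fin 0 → Fin k → ℝ,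
              (∏ i, ENNReal.ofReal |V (fun j => x j i)|)
                * ∏ j, (E j).indicator (fun _ => (1 : ℝ≥0∞)) (x j)
              = ∏ j, (E j).indicator (fun _ => (1 : ℝ≥0∞)) default := by
            intro x
            have hx : ∀ j, x j = default := fun j => Subsingleton.elim _ _
            simp only [Finset.univ_eq_empty, Finset.prod_empty, one_mul]
            exact Finset.prod_congr rfl fun j _ => by rw [hx j]
          rw [lintegral_congr this, lintegral_const, hvol1, mul_one]
        rw [hint, pow_zero, one_mul]
        refine Finset.prod_le_prod' fun j _ => ?_
        by_cases hdef : default ∈ E j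
        · rw [Set.indicator_of_mem hdef]
          have hle : volume (E j) ≤ 1 := by
            rw [show (1:ℝ≥0∞) = volume (Set.univ : Set (Fin 0 → Fin k → ℝ)) by
              rw [volume_pi, Measure.pi_univ]; simp]
            exact measure_mono (Set.subset_univ _)
          exact ENNReal.rpow_le_one hle (one_div_pos.mpr (hp j).1).le
        · have hempty : E j = ∅ := by
            ext y; simp only [Set.mem_empty_iff_false, iff_false]
            intro hy; exact hdef (by rwa [Subsingleton.elim (default : Fin 0 → Fin k → ℝ) y])
          simp only [hempty, measure_empty, Set.indicator_empty,
            ENNReal.zero_rpow_of_pos (one_div_pos.mpr (hp j).1), le_refl]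
    | succ N IH =>
        intro E hE hfin
        set e := MeasurableEquiv.piFinSuccAbove (fun _ : Fin (N+1) => Fin k → ℝ) 0 with he_def
        have he : MeasurePreserving e volume volume :=
          volume_preserving_piFinSuccAbove (fun _ : Fin (N+1) => Fin k → ℝ) 0
        have hsymm : ∀ (a : Fin k → ℝ) (b : Fin N → Fin k → ℝ),
            e.symm (a, b) = Fin.insertNth 0 a b := fun a b => rfl
        have heval0 : ∀ (a : Fin k → ℝ) (b : Fin N → Fin k → ℝ), (e.symm (a, b)) 0 = a := by
          intro a b; rw [hsymm, Fin.insertNth_apply_same]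
        have hevals : ∀ (a : Fin k → ℝ) (b : Fin N → Fin k → ℝ) (i : Fin N),
            (e.symm (a, b)) i.succ = b i := by
          intro a b i; rw [hsymm, ← Fin.zero_succAbove i, Fin.insertNth_apply_succAbove]
        set S : Fin m → Set ((Fin k → ℝ) × (Fin N → Fin k → ℝ)) :=
          fun j => e.symm ⁻¹' (E j) with hS_def
        have hS : ∀ j, MeasurableSet (S j) := fun j => e.symm.measurable (hE j)
        have hSvol : ∀ j, volume (S j) = volume (E j) := fun j =>
          (MeasurePreserving.symm e he).measure_preimage (hE j).nullMeasurableSet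
        set v : Fin m → (Fin k → ℝ) → ℝ≥0∞ :=
          fun j a => volume (Prod.mk a ⁻¹' S j) with hv_def
        have hv : ∀ j, Measurable (v j) := fun j => measurable_measure_prodMk_left (hS j)
        have hvint : ∀ j, (∫⁻ a, v j a) = volume (E j) := by
          intro j
          rw [hv_def, ← Measure.prod_apply (hS j), ← Measure.volume_eq_prod _ _, hSvol j]
        have hvae : ∀ j, ∀ᵐ a : Fin k → ℝ, v j a ≠ ∞ := by
          intro j
          have := ae_lt_top (hv j) (by rw [hvint j]; exact hfin j)
          exact this.mono fun a ha => ha.ne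
        set Es : Fin m → (Fin k → ℝ) → Set (Fin N → Fin k → ℝ) :=
          fun j a => if v j a = ∞ then ∅ else Prod.mk a ⁻¹' S j with hEs_def
        have hEs_meas : ∀ j a, MeasurableSet (Es j a) := by
          intro j a
          show MeasurableSet (if v j a = ∞ then (∅ : Set (Fin N → Fin k → ℝ))
            else Prod.mk a ⁻¹' S j)
          split_ifs
          · exact MeasurableSet.empty
          · exact measurable_prodMk_left (hS j)
        have hEs_sub : ∀ j a, Es j a ⊆ Prod.mk a ⁻¹' S j := by
          intro j a
          show (if v j a = ∞ then (∅ : Set (Fin N → Fin k → ℝ)) else Prod.mk a ⁻¹' S j) ⊆ _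
          split_ifs
          · exact Set.empty_subset _
          · exact subset_rfl
        have hEs_vol : ∀ j a, volume (Es j a) = if v j a = ∞ then 0 else v j a := by
          intro j a
          show volume (if v j a = ∞ then (∅ : Set (Fin N → Fin k → ℝ))
            else Prod.mk a ⁻¹' S j) = _
          split_ifs
          · exact measure_empty
          · rfl
        have hEs_ne : ∀ j a, volume (Es j a) ≠ ∞ := by
          intro j a
          rw [hEs_vol]
          by_cases hja : v j a = ∞ <;> simp [hja]
        have hEs_vol_meas : ∀ j, Measurable fun a => volume (Es j a) := by
          intro j
          have : (fun a => volume (Es j a)) = fun a => if v j a = ∞ then 0 else v j a :=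
            funext fun a => hEs_vol j a
          rw [this]
          exact Measurable.ite ((hv j) (measurableSet_singleton _)) measurable_const (hv j)
        have hEs_vol_ae : (fun j => (fun a => volume (Es j a))) = fun j => (fun a => volume (Es j a)) := rfl
        -- the test functions
        set f : Fin m → (Fin k → ℝ) → ℝ :=
          fun j a => (volume (Es j a)).toReal ^ (1 / p j) with hf_def
        have hf_meas : ∀ j, Measurable (f j) := fun j =>
          (Real.continuous_rpow_const (one_div_pos.mpr (hp j).1).le).measurable.comp
            (hEs_vol_meas j).ennreal_toReal
        have hf_nonneg : ∀ j a, 0 ≤ f j a := fun j a =>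
          Real.rpow_nonneg ENNReal.toReal_nonneg _
        have hpne : ∀ j, p j ≠ 0 := fun j => (hp j).1.ne'
        have habs : ∀ j a, ENNReal.ofReal (|f j a| ^ p j) = volume (Es j a) := by
          intro j a
          rw [abs_of_nonneg (hf_nonneg j a)]
          show ENNReal.ofReal (((volume (Es j a)).toReal ^ (1 / p j)) ^ p j) = _
          rw [← Real.rpow_mul ENNReal.toReal_nonneg,
            one_div_mul_cancel (hpne j), Real.rpow_one, ENNReal.ofReal_toReal (hEs_ne j a)]
        have hofr : ∀ j a, ENNReal.ofReal |f j a| = (volume (Es j a)) ^ (1 / p j) := by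
          intro j a
          rw [abs_of_nonneg (hf_nonneg j a)]
          show ENNReal.ofReal ((volume (Es j a)).toReal ^ (1 / p j)) = _
          rw [← ENNReal.ofReal_rpow_of_nonneg ENNReal.toReal_nonneg
              (one_div_pos.mpr (hp j).1).le,
            ENNReal.ofReal_toReal (hEs_ne j a)]
        have hLp : ∀ j, (∫⁻ a, ENNReal.ofReal (|f j a| ^ p j)) = volume (E j) := by
          intro j
          rw [lintegral_congr fun a => habs j a]
          rw [← hvint j]
          refine lintegral_congr_ae ?_
          filter_upwards [hvae j] with a ha
          rw [hEs_vol, if_neg ha]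
        -- apply the hypothesis to f
        have hstar : ENNReal.ofReal c * ∏ j, (volume (E j)) ^ (1 / p j)
            ≤ ∫⁻ y : Fin m → Fin k → ℝ,
                ENNReal.ofReal |V y| * ∏ j, (volume (Es j (y j))) ^ (1 / p j) := by
          have hh := h f hf_meas
          calc ENNReal.ofReal c * ∏ j, (volume (E j)) ^ (1 / p j)
              = ENNReal.ofReal c *
                ∏ j, (∫⁻ y : Fin k → ℝ, ENNReal.ofReal (|f j y| ^ (p j))) ^ (1 / p j) := by
                rw [show (∏ j, (volume (E j)) ^ (1 / p j))
                    = ∏ j, (∫⁻ y : Fin k → ℝ, ENNReal.ofReal (|f j y| ^ (p j))) ^ (1 / p j)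
                  from Finset.prod_congr rfl fun j _ => by rw [hLp j]]
            _ ≤ ∫⁻ x : Fin m → Fin k → ℝ,
                  ENNReal.ofReal |V x| * ∏ j, ENNReal.ofReal |f j (x j)| := hh
            _ = _ := lintegral_congr fun y => by
                  rw [show (∏ j, ENNReal.ofReal |f j (y j)|)
                      = ∏ j, (volume (Es j (y j))) ^ (1 / p j)
                    from Finset.prod_congr rfl fun j _ => hofr j (y j)]
        -- the measure-preserving splitting map
        set σ : (Fin m → Fin k → ℝ) × (Fin m → Fin N → Fin k → ℝ) →
            (Fin m → Fin (N+1) → Fin k → ℝ) := fun q j => e.symm (q.1 j, q.2 j) with hσ_def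
        have hσ : MeasurePreserving σ volume volume := by
          have h1 : MeasurePreserving
              (fun (g : Fin m → (Fin k → ℝ) × (Fin N → Fin k → ℝ)) j => e.symm (g j))
              volume volume := volume_preserving_pi fun _ => MeasurePreserving.symm e he
          have h2 := MeasurePreserving.symm _ (volume_measurePreserving_arrowProdEquivProdArrow
              (Fin k → ℝ) (Fin N → Fin k → ℝ) (Fin m))
          exact h1.comp h2
        set F : (Fin m → Fin (N+1) → Fin k → ℝ) → ℝ≥0∞ := fun x =>
          (∏ i, ENNReal.ofReal |V (fun j => x j i)|)
            * ∏ j, (E j).indicator (fun _ => (1 : ℝ≥0∞)) (x j) with hF_def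
        have hF_meas : Measurable F := by
          apply Measurable.mul
          · refine Finset.measurable_prod _ fun i _ => ?_
            have hxi : Measurable fun x : (Fin m → Fin (N+1) → Fin k → ℝ) =>
                (fun j => x j i) :=
              measurable_pi_lambda _ fun j => (measurable_pi_apply i).comp (measurable_pi_apply j)
            exact ENNReal.measurable_ofReal.comp ((hV.comp hxi).abs)
          · refine Finset.measurable_prod _ fun j _ => ?_
            exact (measurable_const.indicator (hE j)).comp (measurable_pi_apply j)
        have hFσ : ∀ (y : Fin m → Fin k → ℝ) (z : Fin m → Fin N → Fin k → ℝ),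
            F (σ (y, z)) = ENNReal.ofReal |V y| *
              ((∏ i, ENNReal.ofReal |V (fun j => z j i)|)
                * ∏ j, (Prod.mk (y j) ⁻¹' S j).indicator (fun _ => (1 : ℝ≥0∞)) (z j)) := by
          intro y z
          have hσj : ∀ j, σ (y, z) j = e.symm (y j, z j) := fun j => rfl
          have h0 : (fun j => σ (y, z) j (0 : Fin (N + 1))) = y :=
            funext fun j => heval0 (y j) (z j)
          have hs : ∀ i : Fin N, (fun j => σ (y, z) j i.succ) = fun j => z j i :=
            fun i => funext fun j => hevals (y j) (z j) i
          have hprod : (∏ i, ENNReal.ofReal |V (fun j => σ (y, z) j i)|)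
              = ENNReal.ofReal |V y| * ∏ i : Fin N, ENNReal.ofReal |V (fun j => z j i)| := by
            calc (∏ i, ENNReal.ofReal |V (fun j => σ (y, z) j i)|)
                = ENNReal.ofReal |V (fun j => σ (y, z) j 0)| *
                  ∏ i : Fin N, ENNReal.ofReal |V (fun j => σ (y, z) j i.succ)| :=
                  Fin.prod_univ_succ _
              _ = _ := by
                  rw [h0]
                  exact congrArg _ (Finset.prod_congr rfl fun i _ => by rw [hs i])
          have hind : ∀ j, (E j).indicator (fun _ => (1 : ℝ≥0∞)) (σ (y, z) j)
              = (Prod.mk (y j) ⁻¹' S j).indicator (fun _ => (1 : ℝ≥0∞)) (z j) := by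
            intro j
            simp only [Set.indicator_apply, Set.mem_preimage, hS_def, hσj]
          have hindprod : (∏ j, (E j).indicator (fun _ => (1 : ℝ≥0∞)) (σ (y, z) j))
              = ∏ j, (Prod.mk (y j) ⁻¹' S j).indicator (fun _ => (1 : ℝ≥0∞)) (z j) :=
            Finset.prod_congr rfl fun j _ => hind j
          show (∏ i, ENNReal.ofReal |V (fun j => σ (y, z) j i)|)
              * (∏ j, (E j).indicator (fun _ => (1 : ℝ≥0∞)) (σ (y, z) j)) = _
          rw [hprod, hindprod, mul_assoc]
        -- main chain
        have hmain : (∫⁻ x : Fin m → Fin (N+1) → Fin k → ℝ, F x)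
            = ∫⁻ y : Fin m → Fin k → ℝ, ENNReal.ofReal |V y| *
                ∫⁻ z : Fin m → Fin N → Fin k → ℝ,
                  (∏ i, ENNReal.ofReal |V (fun j => z j i)|)
                    * ∏ j, (Prod.mk (y j) ⁻¹' S j).indicator (fun _ => (1 : ℝ≥0∞)) (z j) := by
          rw [← hσ.lintegral_comp hF_meas]
          rw [show (volume : Measure ((Fin m → Fin k → ℝ) × (Fin m → Fin N → Fin k → ℝ)))
              = (volume : Measure (Fin m → Fin k → ℝ)).prod volume from Measure.volume_eq_prod _ _]
          have hcomp : Measurable fun q : (Fin m → Fin k → ℝ) × (Fin m → Fin N → Fin k → ℝ) =>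
              F (σ q) := hF_meas.comp hσ.measurable
          rw [lintegral_prod _ hcomp.aemeasurable]
          refine lintegral_congr fun y => ?_
          rw [lintegral_congr fun z => hFσ y z]
          rw [lintegral_const_mul' _ _ ENNReal.ofReal_ne_top]
        have hinner : ∀ y : Fin m → Fin k → ℝ,
            (ENNReal.ofReal c) ^ N * ∏ j, (volume (Es j (y j))) ^ (1 / p j)
              ≤ ∫⁻ z : Fin m → Fin N → Fin k → ℝ,
                  (∏ i, ENNReal.ofReal |V (fun j => z j i)|)
                    * ∏ j, (Prod.mk (y j) ⁻¹' S j).indicator (fun _ => (1 : ℝ≥0∞)) (z j) := by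
          intro y
          refine le_trans (IH (fun j => Es j (y j)) (fun j => hEs_meas j (y j))
            (fun j => hEs_ne j (y j))) ?_
          refine lintegral_mono fun z => ?_
          refine mul_le_mul_right (Finset.prod_le_prod' fun j _ => ?_) _
          exact Set.indicator_le_indicator_of_subset (hEs_sub j (y j))
            (fun _ => zero_le) _
        calc (ENNReal.ofReal c) ^ (N+1) * ∏ j, (volume (E j)) ^ (1 / p j)
            = (ENNReal.ofReal c) ^ N *
                (ENNReal.ofReal c * ∏ j, (volume (E j)) ^ (1 / p j)) := by
              rw [pow_succ, mul_assoc]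
          _ ≤ (ENNReal.ofReal c) ^ N *
                ∫⁻ y : Fin m → Fin k → ℝ,
                  ENNReal.ofReal |V y| * ∏ j, (volume (Es j (y j))) ^ (1 / p j) :=
              mul_le_mul_right hstar _
          _ = ∫⁻ y : Fin m → Fin k → ℝ,
                ENNReal.ofReal |V y| *
                  ((ENNReal.ofReal c) ^ N * ∏ j, (volume (Es j (y j))) ^ (1 / p j)) := by
              rw [← lintegral_const_mul' _ _ (ENNReal.pow_ne_top ENNReal.ofReal_ne_top)]
              exact lintegral_congr fun y => by ring
          _ ≤ ∫⁻ y : Fin m → Fin k → ℝ, ENNReal.ofReal |V y| *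
                ∫⁻ z : Fin m → Fin N → Fin k → ℝ,
                  (∏ i, ENNReal.ofReal |V (fun j => z j i)|)
                    * ∏ j, (Prod.mk (y j) ⁻¹' S j).indicator (fun _ => (1 : ℝ≥0∞)) (z j) :=
              lintegral_mono fun y => mul_le_mul_right (hinner y) _
          _ = ∫⁻ x : Fin m → Fin (N+1) → Fin k → ℝ, F x := hmain.symm
  -- now the general case by exhaustion
  intro N E hE
  set En : ℕ → Fin m → Set (Fin N → Fin k → ℝ) :=
    fun n j => E j ∩ spanningSets volume n with hEn_def
  have hEn_meas : ∀ n j, MeasurableSet (En n j) := fun n j =>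
    (hE j).inter (measurableSet_spanningSets _ n)
  have hEn_fin : ∀ n j, volume (En n j) ≠ ∞ := fun n j =>
    ((measure_mono Set.inter_subset_right).trans_lt (measure_spanningSets_lt_top _ n)).ne
  have hEn_mono : ∀ j, Monotone fun n => volume (En n j) := fun j a b hab =>
    measure_mono (Set.inter_subset_inter_right _ (monotone_spanningSets _ hab))
  have hsup : ∀ j, volume (E j) = ⨆ n, volume (En n j) := by
    intro j
    conv_lhs => rw [show E j = ⋃ n, En n j by
      rw [hEn_def, ← Set.inter_iUnion, iUnion_spanningSets, Set.inter_univ]]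
    apply Directed.measure_iUnion
    exact (monotone_const.inter (monotone_spanningSets _)).directed_le
  have hrw : ∏ j, (volume (E j)) ^ (1 / p j)
      = ⨆ n, ∏ j, (volume (En n j)) ^ (1 / p j) := by
    rw [Finset.prod_congr rfl fun j _ => by
      rw [hsup j, iSup_rpow' _ (one_div_pos.mpr (hp j).1)]]
    exact prod_iSup_mono' _ _ fun j a b hab =>
      ENNReal.rpow_le_rpow (hEn_mono j hab) (one_div_pos.mpr (hp j).1).le
  rw [hrw, ENNReal.mul_iSup]
  refine iSup_le fun n => ?_
  refine le_trans (key N (En n) (hEn_meas n) (hEn_fin n)) ?_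
  refine lintegral_mono fun x => mul_le_mul_right (Finset.prod_le_prod' fun j _ => ?_) _
  exact Set.indicator_le_indicator_of_subset Set.inter_subset_left (fun _ => zero_le) _
end

section
/- Let $T$ be the operator on functions on $\mathbb{R}^2$ defined by $Tf(u_0, u_1, \ldots, u_d) := \int_{\mathbb{R}} f(t, u_0 + u_1 t + \cdots + u_d t^d)\, dt$ (averaging over graphs of degree-$d$ polynomials). If $T$ maps $L^p(\mathbb{R}^2)$ boundedly to $L^q(\mathbb{R}^{d+1})$, then necessarily $p = 1 + \frac{d}{2}$ and $q = (d+1)p = \frac{(d+1)(d+2)}{2}$. -/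
open MeasureTheory ENNReal

lemma aux_exp_zero {K b : ℝ} (h : ∀ x : ℝ, 0 < x → x ^ b ≤ K) : b = 0 := by
  by_contra hb
  have hK : (1:ℝ) ≤ K := by simpa using h 1 one_pos
  have hx : (0:ℝ) < (K+1) ^ (1/b) := Real.rpow_pos_of_pos (by linarith) _
  have h2 := h _ hx
  rw [← Real.rpow_mul (by linarith : (0:ℝ) ≤ K+1), one_div, inv_mul_cancel₀ hb,
    Real.rpow_one] at h2
  linarith

/-- Necessity of the exponents for the polynomial-graph averaging operator on
`ℝ²`: if `Tf(u) = ∫ f(t, u₀ + u₁ t + ⋯ + u_d t^d) dt` is bounded from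
`L^p(ℝ²)` to `L^q(ℝ^{d+1})`, then `p = 1 + d/2` and `q = (d+1)(d+2)/2`. -/
theorem stmt_17 (d : ℕ) (hd : 1 ≤ d) (p q : ℝ) (hp : 0 < p) (hq : 0 < q)
    (C : ℝ) (hC : 0 < C)
    (h : ∀ f : ℝ × ℝ → ℝ≥0∞, Measurable f →
      (∫⁻ u : Fin (d + 1) → ℝ,
          (∫⁻ t : ℝ, f (t, ∑ i, u i * t ^ (i : ℕ))) ^ q) ^ (1 / q)
        ≤ ENNReal.ofReal C * (∫⁻ z, f z ^ p) ^ (1 / p)) :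
    p = 1 + (d : ℝ) / 2 ∧ q = ((d : ℝ) + 1) * ((d : ℝ) + 2) / 2 := by
  set N : ℕ := ∑ i : Fin (d+1), (i : ℕ) with hNdef
  have hNr : N * 2 = d * (d + 1) := by
    have h1 : N = ∑ i ∈ Finset.range (d+1), i := Fin.sum_univ_eq_sum_range (fun i => i) (d+1)
    rw [h1, Finset.sum_range_id_mul_two]
    simp [Nat.mul_comm]
  have hN2 : (N : ℝ) = d * (d + 1) / 2 := by
    have h2 : ((N:ℝ)) * 2 = (d:ℝ) * ((d:ℝ)+1) := by exact_mod_cast hNr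
    linarith
  -- master real inequality
  have master : ∀ δ δ' : ℝ, 0 < δ → 0 < δ' →
      (δ' ^ (d+1) / (((d:ℝ)+1) ^ (d+1) * δ ^ N)) ^ (1/q) * δ ≤ C * (δ * δ') ^ (1/p) := by
    intro δ δ' hδ hδ'
    set S : Set (ℝ × ℝ) := Set.Icc (0:ℝ) δ ×ˢ Set.Icc (0:ℝ) δ' with hS
    have hSm : MeasurableSet S := measurableSet_Icc.prod measurableSet_Icc
    set f : ℝ × ℝ → ℝ≥0∞ := S.indicator (fun _ => 1) with hf
    have hfm : Measurable f := measurable_const.indicator hSm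
    have key := h f hfm
    -- RHS
    have hR : (∫⁻ z, f z ^ p) = ENNReal.ofReal δ * ENNReal.ofReal δ' := by
      have : ∀ z, f z ^ p = S.indicator (fun _ => 1) z := by
        intro z
        by_cases hz : z ∈ S <;>
          simp [hf, Set.indicator, hz, ENNReal.zero_rpow_of_pos hp]
      simp_rw [this]
      rw [lintegral_indicator hSm, setLIntegral_one, hS, Measure.volume_eq_prod,
        Measure.prod_prod, Real.volume_Icc, Real.volume_Icc, sub_zero, sub_zero]
    -- LHS lower bound
    set c : Fin (d+1) → ℝ := fun i => δ' / (((d:ℝ)+1) * δ ^ (i:ℕ)) with hc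
    have hcpos : ∀ i, 0 < c i := by
      intro i
      apply div_pos hδ'
      positivity
    set B : Set (Fin (d+1) → ℝ) := Set.univ.pi (fun i => Set.Icc 0 (c i)) with hB
    have hBm : MeasurableSet B := MeasurableSet.univ_pi (fun i => measurableSet_Icc)
    have hinner : ∀ u ∈ B, ENNReal.ofReal δ ≤ ∫⁻ t : ℝ, f (t, ∑ i, u i * t ^ (i:ℕ)) := by
      intro u hu
      have hpt : ∀ t : ℝ, (Set.Icc 0 δ).indicator (fun _ => (1:ℝ≥0∞)) t
          ≤ f (t, ∑ i, u i * t ^ (i:ℕ)) := by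
        intro t
        by_cases ht : t ∈ Set.Icc (0:ℝ) δ
        · have hmem : (t, ∑ i, u i * t ^ (i:ℕ)) ∈ S := by
            refine ⟨ht, ?_, ?_⟩
            · show (0:ℝ) ≤ ∑ i, u i * t ^ (i:ℕ)
              apply Finset.sum_nonneg
              intro i _
              have := (hu i (Set.mem_univ i)).1
              exact mul_nonneg this (pow_nonneg ht.1 _)
            · show ∑ i, u i * t ^ (i:ℕ) ≤ δ'
              calc ∑ i, u i * t ^ (i:ℕ) ≤ ∑ _i : Fin (d+1), δ' / ((d:ℝ)+1) := by
                    apply Finset.sum_le_sum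
                    intro i _
                    have h1 : u i ≤ c i := (hu i (Set.mem_univ i)).2
                    have h2 : t ^ (i:ℕ) ≤ δ ^ (i:ℕ) := pow_le_pow_left₀ ht.1 ht.2 _
                    calc u i * t ^ (i:ℕ) ≤ c i * δ ^ (i:ℕ) := by
                          apply mul_le_mul h1 h2 (pow_nonneg ht.1 _) (le_of_lt (hcpos i))
                      _ = δ' / ((d:ℝ)+1) := by
                          rw [hc]
                          field_simp
                _ = δ' := by
                    rw [Finset.sum_const, Finset.card_univ, Fintype.card_fin]
                    rw [nsmul_eq_mul, Nat.cast_add, Nat.cast_one]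
                    field_simp
          simp [hf, Set.indicator, ht, hmem]
        · simp [Set.indicator, ht]
      calc ENNReal.ofReal δ = ∫⁻ t : ℝ, (Set.Icc 0 δ).indicator (fun _ => (1:ℝ≥0∞)) t := by
            rw [lintegral_indicator measurableSet_Icc, setLIntegral_one, Real.volume_Icc, sub_zero]
        _ ≤ _ := lintegral_mono hpt
    have hL : (∏ i, ENNReal.ofReal (c i)) * ENNReal.ofReal δ ^ q
        ≤ ∫⁻ u : Fin (d+1) → ℝ, (∫⁻ t : ℝ, f (t, ∑ i, u i * t ^ (i:ℕ))) ^ q := by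
      calc (∏ i, ENNReal.ofReal (c i)) * ENNReal.ofReal δ ^ q
          = ∫⁻ _u in B, ENNReal.ofReal δ ^ q := by
            rw [setLIntegral_const, hB, volume_pi_pi]
            simp_rw [Real.volume_Icc, sub_zero]
            ring
        _ ≤ ∫⁻ u in B, (∫⁻ t : ℝ, f (t, ∑ i, u i * t ^ (i:ℕ))) ^ q := by
            apply setLIntegral_mono' hBm
            intro u hu
            exact ENNReal.rpow_le_rpow (hinner u hu) (le_of_lt hq)
        _ ≤ _ := setLIntegral_le_lintegral _ _
    -- combine
    have h1q : (0:ℝ) ≤ 1/q := by positivity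
    have step : ((∏ i, ENNReal.ofReal (c i)) * ENNReal.ofReal δ ^ q) ^ (1/q)
        ≤ ENNReal.ofReal C * (ENNReal.ofReal δ * ENNReal.ofReal δ') ^ (1/p) := by
      rw [← hR]
      exact le_trans (ENNReal.rpow_le_rpow hL h1q) key
    have hlhs : ((∏ i, ENNReal.ofReal (c i)) * ENNReal.ofReal δ ^ q) ^ (1/q)
        = ENNReal.ofReal ((∏ i, c i) ^ (1/q) * δ) := by
      rw [ENNReal.mul_rpow_of_nonneg _ _ h1q, ← ENNReal.rpow_mul,
        mul_one_div_cancel (ne_of_gt hq), ENNReal.rpow_one,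
        ← ENNReal.ofReal_prod_of_nonneg (fun i _ => le_of_lt (hcpos i)),
        ENNReal.ofReal_rpow_of_pos (Finset.prod_pos (fun i _ => hcpos i)),
        ← ENNReal.ofReal_mul (by positivity)]
    have hrhs : ENNReal.ofReal C * (ENNReal.ofReal δ * ENNReal.ofReal δ') ^ (1/p)
        = ENNReal.ofReal (C * (δ * δ') ^ (1/p)) := by
      rw [← ENNReal.ofReal_mul (le_of_lt hδ), ENNReal.ofReal_rpow_of_pos (by positivity),
        ← ENNReal.ofReal_mul (le_of_lt hC)]
    rw [hlhs, hrhs, ENNReal.ofReal_le_ofReal_iff (by positivity)] at step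
    have hprod : ∏ i, c i = δ' ^ (d+1) / (((d:ℝ)+1) ^ (d+1) * δ ^ N) := by
      rw [hc]
      rw [Finset.prod_div_distrib, Finset.prod_const, Finset.card_univ, Fintype.card_fin,
        Finset.prod_mul_distrib, Finset.prod_const, Finset.card_univ, Fintype.card_fin,
        Finset.prod_pow_eq_pow_sum]
    rwa [hprod] at step
  -- rewrite master in rpow form
  set B0 : ℝ := (((d:ℝ)+1) ^ (d+1)) ^ (1/q) with hB0
  have hB0pos : 0 < B0 := by positivity
  have master' : ∀ δ δ' : ℝ, 0 < δ → 0 < δ' →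
      δ' ^ (((d:ℝ)+1)/q) * δ ^ (1 - (N:ℝ)/q) / B0 ≤ C * δ ^ (1/p) * δ' ^ (1/p) := by
    intro δ δ' hδ hδ'
    have hm := master δ δ' hδ hδ'
    have hl : (δ' ^ (d+1) / (((d:ℝ)+1) ^ (d+1) * δ ^ N)) ^ (1/q) * δ
        = δ' ^ (((d:ℝ)+1)/q) * δ ^ (1 - (N:ℝ)/q) / B0 := by
      rw [Real.div_rpow (by positivity) (by positivity),
        Real.mul_rpow (by positivity) (by positivity),
        ← Real.rpow_natCast δ' (d+1), ← Real.rpow_natCast δ N,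
        ← Real.rpow_mul hδ'.le, ← Real.rpow_mul hδ.le,
        Real.rpow_sub hδ, Real.rpow_one]
      push_cast
      field_simp
      ring
    have hr : C * (δ * δ') ^ (1/p) = C * δ ^ (1/p) * δ' ^ (1/p) := by
      rw [Real.mul_rpow hδ.le hδ'.le]
      ring
    rw [hl, hr] at hm
    exact hm
  have e1 : ((d:ℝ)+1)/q - 1/p = 0 := by
    apply aux_exp_zero (K := C * B0)
    intro x hx
    have hm := master' 1 x one_pos hx
    simp only [Real.one_rpow, mul_one, one_mul] at hm
    have hxp : 0 < x ^ (1/p) := Real.rpow_pos_of_pos hx _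
    rw [Real.rpow_sub hx, div_le_iff₀ hxp]
    rw [div_le_iff₀ hB0pos] at hm
    nlinarith [hm, hxp, hB0pos]
  have e2 : 1 - (N:ℝ)/q - 1/p = 0 := by
    apply aux_exp_zero (K := C * B0)
    intro x hx
    have hm := master' x 1 hx one_pos
    simp only [Real.one_rpow, mul_one, one_mul] at hm
    have hxp : 0 < x ^ (1/p) := Real.rpow_pos_of_pos hx _
    have heq : x ^ (1 - (N:ℝ)/q - 1/p) = x ^ (1 - (N:ℝ)/q) / x ^ (1/p) :=
      Real.rpow_sub hx _ _
    rw [heq, div_le_iff₀ hxp]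
    rw [div_le_iff₀ hB0pos] at hm
    nlinarith [hm, hxp, hB0pos]
  -- final algebra
  have hp0 : p ≠ 0 := ne_of_gt hp
  have hq0 : q ≠ 0 := ne_of_gt hq
  have hd1 : (0:ℝ) < (d:ℝ) + 1 := by positivity
  have hpq : ((d:ℝ)+1) * p = q := by
    field_simp at e1
    linarith
  rw [hN2, ← hpq] at e2
  have hP : p = 1 + (d:ℝ)/2 := by
    field_simp at e2
    nlinarith [e2, hp, hd1]
  refine ⟨hP, ?_⟩
  rw [← hpq, hP]
  ring
end

section
/- Fix integers $n, n', d \geq 1$, $1 \leq l \leq d$, and $1 \leq p, q < \infty$. Let $T := T_{n,n',d}$ be the operator $Tf(u) := \int_{\mathbb{R}^n} f(t, \sum_{|\alpha| \leq d} u_\alpha t^\alpha)\, dt$ mapping functions on $\mathbb{R}^n \times \mathbb{R}^{n'}$ to functions on $(\mathbb{R}^{n'})^{M_{n,d}}$, where $M_{n,d}$ is the set of multiindices of length $n$ and degree at most $d$. If $T$ is bounded from $L^p$ to $L^q$ even when restricted to functions supported in a fixed compact set and with the $L^q$ norm taken over a fixed compact set containing the origin, then $n + \frac{n'}{q}\binom{n+l}{n+1}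 \geq \frac{n + l n'}{p}$. -/
open MeasureTheory ENNReal

/-- The set of multiindices of length `n` and degree at most `d`. -/
def MultiIdx (n d : ℕ) := {α : Fin n → Fin (d + 1) // (∑ i, (α i : ℕ)) ≤ d}

instance (n d : ℕ) : Fintype (MultiIdx n d) := by
  unfold MultiIdx; infer_instance

/-- The operator `T_{n,n',d}` averaging over graphs of `n'`-tuples of
polynomials of degree at most `d` in `n` variables (acting on nonnegative
measurable functions). -/
noncomputable def Tpoly (n n' d : ℕ) (f : (Fin n → ℝ) × (Fin n' → ℝ) → ℝ≥0∞)
    (u : MultiIdx n d → Fin n' → ℝ) : ℝ≥0∞ :=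
  ∫⁻ t : Fin n → ℝ, f (t, fun j => ∑ α : MultiIdx n d, u α j * ∏ i, t i ^ ((α.1 i : ℕ)))

section Aux
open Finset

section Comb

lemma card_piAntidiag_univ (n k : ℕ) :
    (Finset.piAntidiag (Finset.univ : Finset (Fin n)) k).card = ((n + k - 1).choose k) := by
  classical
  rw [← Finset.map_sym_eq_piAntidiag, Finset.card_map, Finset.sym_univ, Finset.card_univ,
    Sym.card_sym_eq_choose, Fintype.card_fin]

lemma hockey (m l : ℕ) : ∑ k ∈ range (l+1), (m + k).choose m = (m + l + 1).choose (m+1) := by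
  have h : ∑ j ∈ Icc m (m + l), j.choose m = (m + l + 1).choose (m + 1) :=
    Nat.sum_Icc_choose (m + l) m
  rw [← h, ← Finset.Ico_add_one_right_eq_Icc, Finset.sum_Ico_eq_sum_range]
  have : m + l + 1 - m = l + 1 := by omega
  rw [this]

lemma idA (m l : ℕ) : ∑ k ∈ range l, (l - k) * (m + k).choose m = (m + 1 + l).choose (m + 2) := by
  induction l with
  | zero => simp [Nat.choose_eq_zero_of_lt]
  | succ l ih =>
    have step : ∀ k ∈ range (l+1), (l + 1 - k) * (m + k).choose m
        = (l - k) * (m + k).choose m + (m + k).choose m := by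
      intro k hk
      rw [mem_range] at hk
      have : l + 1 - k = (l - k) + 1 := by omega
      rw [this, add_mul, one_mul]
    rw [Finset.sum_congr rfl step, Finset.sum_add_distrib, Finset.sum_range_succ,
      Nat.sub_self, zero_mul, add_zero, ih, hockey]
    have h1 : (m + 1 + (l + 1)).choose (m + 2)
        = (m + 1 + l).choose (m + 1) + (m + 1 + l).choose (m + 2) := by
      have h2 := Nat.choose_succ_succ (m + 1 + l) (m + 1)
      have h3 : m + 1 + (l + 1) = (m + 1 + l) + 1 := by ring
      rw [h3, h2]
    have h4 : (m + l + 1).choose (m+1) = (m + 1 + l).choose (m+1) := by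
      rw [show m + l + 1 = m + 1 + l by ring]
    omega

lemma sum_piAntidiag_const (n l k : ℕ) (hn : 1 ≤ n) :
    ∑ g ∈ Finset.piAntidiag (Finset.univ : Finset (Fin n)) k, (l - ∑ i, g i)
      = (l - k) * ((n - 1) + k).choose (n - 1) := by
  have hc : ∀ g ∈ Finset.piAntidiag (Finset.univ : Finset (Fin n)) k,
      (l - ∑ i, g i) = l - k := by
    intro g hg
    rw [Finset.mem_piAntidiag] at hg
    rw [← hg.1]
  rw [Finset.sum_congr rfl hc, Finset.sum_const, smul_eq_mul, card_piAntidiag_univ]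
  have e1 : n + k - 1 = (n - 1) + k := by omega
  have e2 : ((n-1) + k).choose k = ((n-1) + k).choose (n-1) := by
    rw [← Nat.choose_symm (Nat.le_add_right _ _)]
    congr 1; omega
  rw [e1, e2, mul_comm]

lemma sum_msub (n d l : ℕ) (hn : 1 ≤ n) (hld : l ≤ d) :
    ∑ α : MultiIdx n d, (l - ∑ i, ((α.1 i : ℕ))) = (n + l).choose (n + 1) := by
  classical
  set T : Finset (Fin n → ℕ) :=
    (Fintype.piFinset fun _ : Fin n => Finset.range (d+1)).filter (fun g => ∑ i, g i ≤ d) with hT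
  have h3 : T.filter (fun g => ∑ i, g i < l)
      = (Finset.range l).biUnion (fun k => Finset.piAntidiag Finset.univ k) := by
    ext g
    simp only [hT, mem_filter, Fintype.mem_piFinset, mem_range, mem_biUnion,
      Finset.mem_piAntidiag]
    constructor
    · rintro ⟨⟨_, hsum⟩, hlt⟩
      exact ⟨∑ i, g i, hlt, rfl, fun i _ => Finset.mem_univ i⟩
    · rintro ⟨k, hk, hsum, -⟩
      have he : univ.sum g = ∑ i : Fin n, g i := rfl
      have hb : ∀ i, g i ≤ ∑ j : Fin n, g j := fun i =>
        Finset.single_le_sum (fun j _ => Nat.zero_le _) (Finset.mem_univ i)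
      rw [he] at hsum
      refine ⟨⟨fun i => ?_, by omega⟩, by omega⟩
      have := hb i; omega
  have h1 : ∑ α : MultiIdx n d, (l - ∑ i, ((α.1 i : ℕ))) = ∑ g ∈ T, (l - ∑ i, g i) := by
    apply Finset.sum_bij (i := fun (α : MultiIdx n d) _ => fun i => ((α.1 i : ℕ)))
    · intro α _
      simp only [hT, mem_filter, Fintype.mem_piFinset, mem_range]
      exact ⟨fun i => (α.1 i).2, α.2⟩
    · intro a _ b _ hab
      apply Subtype.ext; funext i
      exact Fin.ext (congrFun hab i)
    · intro g hg
      simp only [hT, mem_filter, Fintype.mem_piFinset, mem_range] at hg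
      exact ⟨⟨fun i => ⟨g i, hg.1 i⟩, hg.2⟩, Finset.mem_univ _, rfl⟩
    · intro α _; rfl
  rw [h1]; clear h1
  have h2 : ∑ g ∈ T, (l - ∑ i, g i) = ∑ g ∈ T.filter (fun g => ∑ i, g i < l), (l - ∑ i, g i) := by
    symm
    apply Finset.sum_filter_of_ne
    intro g _ hne
    omega
  rw [h2, h3, Finset.sum_biUnion]
  · clear h2 h3
    rw [Finset.sum_congr rfl (fun k _ => sum_piAntidiag_const n l k hn)]
    obtain ⟨m, rfl⟩ : ∃ m, n = m + 1 := ⟨n - 1, by omega⟩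
    simpa using idA m l
  · clear h2 h3
    intro a _ b _ hab
    simp only [Finset.disjoint_left, Finset.mem_piAntidiag]
    rintro g ⟨hga, -⟩ ⟨hgb, -⟩
    exact hab (hga ▸ hgb ▸ rfl)

end Comb

section Analysis

lemma vol_box_const {ι : Type*} [Fintype ι] (a : ℝ) (ha : 0 ≤ a) :
    volume (Set.pi Set.univ fun _ : ι => Set.Icc (-a) a)
      = ENNReal.ofReal ((2 * a) ^ Fintype.card ι) := by
  have : volume (Set.pi Set.univ fun _ : ι => Set.Icc (-a) a)
      = ENNReal.ofReal (∏ _i : ι, (2 * a)) := by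
    rw [volume_pi_pi, ENNReal.ofReal_prod_of_nonneg (fun i _ => by positivity)]
    congr 1; funext i
    rw [Real.volume_Icc]
    congr 1; ring
  rw [this, Finset.prod_const, Finset.card_univ]

lemma exponent_ge {a c x y : ℝ} (ha : 0 < a) (hc : 0 < c)
    (H : ∀ δ : ℝ, 0 < δ → δ ≤ 1 → a * δ ^ x ≤ c * δ ^ y) : y ≤ x := by
  by_contra hxy
  push_neg at hxy
  set t := y - x with ht
  have ht0 : 0 < t := by simp [ht]; linarith
  set ε : ℝ := min (1/2) (a / (2 * c)) with hε
  have hε0 : 0 < ε := lt_min (by norm_num) (by positivity)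
  have hε1 : ε < 1 := lt_of_le_of_lt (min_le_left _ _) (by norm_num)
  set δ : ℝ := ε ^ (1 / t) with hδ
  have hδ0 : 0 < δ := Real.rpow_pos_of_pos hε0 _
  have hδ1 : δ ≤ 1 := le_of_lt (Real.rpow_lt_one (le_of_lt hε0) hε1 (by positivity))
  have hδt : δ ^ t = ε := by
    rw [← Real.rpow_mul (le_of_lt hε0), one_div, inv_mul_cancel₀ (ne_of_gt ht0), Real.rpow_one]
  have h1 := H δ hδ0 hδ1
  have h2 : δ ^ y = δ ^ x * δ ^ t := by
    rw [← Real.rpow_add hδ0]; congr 1; ring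
  rw [h2, ← mul_assoc] at h1
  have h3 : a ≤ c * δ ^ t := by
    have hx0 : 0 < δ ^ x := Real.rpow_pos_of_pos hδ0 _
    calc a = a * δ ^ x / δ ^ x := by field_simp
    _ ≤ c * δ ^ x * δ ^ t / δ ^ x := by gcongr
    _ = c * δ ^ t := by field_simp
  rw [hδt] at h3
  have : c * ε ≤ a / 2 := by
    calc c * ε ≤ c * (a / (2 * c)) := by gcongr; exact min_le_right _ _
    _ = a / 2 := by field_simp
  linarith

lemma rpow_rpow_inv (x q : ℝ) (hx : 0 ≤ x) (hq : q ≠ 0) : (x ^ q) ^ (1/q) = x := by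
  rw [← Real.rpow_mul hx, mul_one_div_cancel hq, Real.rpow_one]

lemma pow_rpow_div (δ : ℝ) (hδ : 0 ≤ δ) (m : ℕ) (q : ℝ) :
    ((δ ^ m : ℝ)) ^ (1/q) = δ ^ ((m : ℝ)/q) := by
  rw [← Real.rpow_natCast δ m, ← Real.rpow_mul hδ, mul_one_div]

lemma lhs_form (n Nn Sn : ℕ) (q δ : ℝ) (hq : q ≠ 0) (hδ0 : 0 < δ) :
    (((2*δ)^n)^q * ((2:ℝ)^Nn * δ^Sn))^(1/q)
      = ((2:ℝ)^n * (((2:ℝ)^Nn)^(1/q))) * δ^((n:ℝ) + (Sn : ℝ)/q) := by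
  have h2δ : (0:ℝ) ≤ (2*δ)^n := by positivity
  rw [Real.mul_rpow (by positivity) (by positivity),
      Real.mul_rpow (by positivity) (by positivity),
      rpow_rpow_inv _ _ h2δ hq, pow_rpow_div δ (le_of_lt hδ0),
      mul_pow, Real.rpow_add hδ0, Real.rpow_natCast]
  ring

lemma rhs_form (n n' l : ℕ) (B p δ : ℝ) (hB : 0 < B) (hδ0 : 0 < δ) :
    (((2*δ):ℝ)^n * (2*(B*δ^l))^n')^(1/p)
      = (((2:ℝ)^n * (2*B)^n')^(1/p)) * δ^(((n:ℝ) + (l:ℝ)*(n':ℝ))/p) := by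
  have e1 : ((2*δ):ℝ)^n * (2*(B*δ^l))^n' = ((2:ℝ)^n * (2*B)^n') * δ^(n + l*n') := by
    rw [mul_pow, mul_pow, mul_pow, ← pow_mul, pow_add]
    ring
  rw [e1, Real.mul_rpow (by positivity) (by positivity),
    ← Real.rpow_natCast δ (n + l*n'), ← Real.rpow_mul (le_of_lt hδ0)]
  push_cast
  rw [mul_one_div]

lemma poly_bound (n n' d l : ℕ) (δ : ℝ) (hδ0 : 0 < δ) (hδ1 : δ ≤ 1)
    (u : MultiIdx n d → Fin n' → ℝ)
    (hu : ∀ α j, |u α j| ≤ δ ^ (l - ∑ i, ((α.1 i : ℕ))))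
    (t : Fin n → ℝ) (ht : ∀ i, |t i| ≤ δ) (j : Fin n') :
    |∑ α : MultiIdx n d, u α j * ∏ i, t i ^ ((α.1 i : ℕ))|
      ≤ (Fintype.card (MultiIdx n d) : ℝ) * δ ^ l := by
  calc |∑ α : MultiIdx n d, u α j * ∏ i, t i ^ ((α.1 i : ℕ))|
      ≤ ∑ α : MultiIdx n d, |u α j * ∏ i, t i ^ ((α.1 i : ℕ))| :=
        Finset.abs_sum_le_sum_abs _ _
    _ ≤ ∑ _α : MultiIdx n d, δ ^ l := by
        apply Finset.sum_le_sum
        intro α _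
        rw [abs_mul, Finset.abs_prod]
        have h1 : ∏ i, |t i ^ ((α.1 i : ℕ))| ≤ ∏ i, δ ^ ((α.1 i : ℕ)) := by
          apply Finset.prod_le_prod (fun i _ => abs_nonneg _)
          intro i _
          rw [abs_pow]
          exact pow_le_pow_left₀ (abs_nonneg _) (ht i) _
        have h2 : |u α j| * ∏ i, |t i ^ ((α.1 i : ℕ))|
            ≤ δ ^ (l - ∑ i, ((α.1 i : ℕ))) * ∏ i, δ ^ ((α.1 i : ℕ)) :=
          mul_le_mul (hu α j) h1 (Finset.prod_nonneg fun i _ => abs_nonneg _) (by positivity)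
        refine le_trans h2 ?_
        rw [Finset.prod_pow_eq_pow_sum, ← pow_add]
        apply pow_le_pow_of_le_one (le_of_lt hδ0) hδ1
        omega
    _ = (Fintype.card (MultiIdx n d) : ℝ) * δ ^ l := by
        rw [Finset.sum_const, Finset.card_univ, nsmul_eq_mul]

end Analysis

end Aux

/-- Necessity for local estimates: if `T_{n,n',d}` maps `L^p_comp` to
`L^q_loc`, then `n + (n'/q) C(n+l, n+1) ≥ (n + l n')/p` for each `1 ≤ l ≤ d`. -/
theorem stmt_18 (n n' d l : ℕ) (hn : 1 ≤ n) (hn' : 1 ≤ n') (hl : 1 ≤ l) (hld : l ≤ d)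
    (p q : ℝ) (hp : 1 ≤ p) (hq : 1 ≤ q)
    (h : ∀ (K₁ : Set ((Fin n → ℝ) × (Fin n' → ℝ)))
        (K₂ : Set (MultiIdx n d → Fin n' → ℝ)), IsCompact K₁ → IsCompact K₂ →
      ∃ C : ℝ, ∀ f : (Fin n → ℝ) × (Fin n' → ℝ) → ℝ≥0∞, Measurable f →
        (∀ z ∉ K₁, f z = 0) →
        (∫⁻ u in K₂, (Tpoly n n' d f u) ^ q) ^ (1 / q)
          ≤ ENNReal.ofReal C * (∫⁻ z, f z ^ p) ^ (1 / p)) :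
    (n : ℝ) + ((n' : ℝ) / q) * (Nat.choose (n + l) (n + 1))
      ≥ ((n : ℝ) + (l : ℝ) * (n' : ℝ)) / p := by
  classical
  have hp0 : 0 < p := by linarith
  have hq0 : 0 < q := by linarith
  set N := Fintype.card (MultiIdx n d) with hNdef
  have hNpos : 0 < N := Fintype.card_pos_iff.mpr ⟨⟨fun _ => 0, by simp⟩⟩
  set B : ℝ := (N : ℝ) with hBdef
  have hB : 0 < B := by rw [hBdef]; exact_mod_cast hNpos
  set S : ℕ := ∑ α : MultiIdx n d, (l - ∑ i, ((α.1 i : ℕ))) with hSdef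
  have hS : S = (n + l).choose (n + 1) := sum_msub n d l hn hld
  obtain ⟨C, hC⟩ := h
    ((Set.pi Set.univ fun _ : Fin n => Set.Icc (-1:ℝ) 1) ×ˢ
      (Set.pi Set.univ fun _ : Fin n' => Set.Icc (-B) B))
    (Set.pi Set.univ fun _ : MultiIdx n d =>
      Set.pi Set.univ fun _ : Fin n' => Set.Icc (-1:ℝ) 1)
    ((isCompact_univ_pi fun _ => isCompact_Icc).prod
      (isCompact_univ_pi fun _ => isCompact_Icc))
    (isCompact_univ_pi fun _ => isCompact_univ_pi fun _ => isCompact_Icc)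
  have key : ∀ δ : ℝ, 0 < δ → δ ≤ 1 →
      ((2:ℝ)^n * (((2:ℝ)^(N*n'))^(1/q))) * δ^((n:ℝ) + ((S*n' : ℕ) : ℝ)/q)
        ≤ ((1 ⊔ |C|) * (((2:ℝ)^n * (2*B)^n')^(1/p))) * δ^(((n:ℝ) + (l:ℝ)*(n':ℝ))/p) := by
    intro δ hδ0 hδ1
    set F := (Set.pi Set.univ fun _ : Fin n => Set.Icc (-δ) δ) ×ˢ
        (Set.pi Set.univ fun _ : Fin n' => Set.Icc (-(B*δ^l)) (B*δ^l)) with hFdef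
    have hFmeas : MeasurableSet F :=
      (MeasurableSet.univ_pi fun _ => measurableSet_Icc).prod
        (MeasurableSet.univ_pi fun _ => measurableSet_Icc)
    set f := F.indicator (1 : ((Fin n → ℝ) × (Fin n' → ℝ)) → ℝ≥0∞) with hfdef
    have hfmeas : Measurable f := measurable_const.indicator hFmeas
    have hδl1 : δ^l ≤ 1 := pow_le_one₀ (le_of_lt hδ0) hδ1
    have hsupp : ∀ z ∉ ((Set.pi Set.univ fun _ : Fin n => Set.Icc (-1:ℝ) 1) ×ˢ
        (Set.pi Set.univ fun _ : Fin n' => Set.Icc (-B) B)), f z = 0 := by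
      intro z hz
      apply Set.indicator_of_notMem
      intro hzF
      apply hz
      have hsub : F ⊆ (Set.pi Set.univ fun _ : Fin n => Set.Icc (-1:ℝ) 1) ×ˢ
          (Set.pi Set.univ fun _ : Fin n' => Set.Icc (-B) B) := by
        apply Set.prod_mono
        · exact Set.pi_mono fun i _ => Set.Icc_subset_Icc (by linarith) hδ1
        · have hBδ : B*δ^l ≤ B := by nlinarith
          exact Set.pi_mono fun j _ => Set.Icc_subset_Icc (by linarith) hBδ
      exact hsub hzF
    have hRHS : (∫⁻ z, f z ^ p) = ENNReal.ofReal ((2*δ)^n * (2*(B*δ^l))^n') := by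
      have h1 : ∀ z, f z ^ p = f z := by
        intro z
        by_cases hz : z ∈ F
        · simp [hfdef, Set.indicator_of_mem hz]
        · simp [hfdef, Set.indicator_of_notMem hz, ENNReal.zero_rpow_of_pos hp0]
      rw [lintegral_congr h1, hfdef, lintegral_indicator_one hFmeas, hFdef,
        Measure.volume_eq_prod, Measure.prod_prod,
        vol_box_const _ (le_of_lt hδ0), vol_box_const _ (by positivity),
        Fintype.card_fin, Fintype.card_fin, ← ENNReal.ofReal_mul (by positivity)]
    set G := Set.pi Set.univ fun α : MultiIdx n d => Set.pi Set.univ fun _ : Fin n' =>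
        Set.Icc (-(δ ^ (l - ∑ i, ((α.1 i : ℕ))))) (δ ^ (l - ∑ i, ((α.1 i : ℕ)))) with hGdef
    have hGmeas : MeasurableSet G :=
      MeasurableSet.univ_pi fun _ => MeasurableSet.univ_pi fun _ => measurableSet_Icc
    have hGsub : G ⊆ Set.pi Set.univ fun _ : MultiIdx n d =>
        Set.pi Set.univ fun _ : Fin n' => Set.Icc (-1:ℝ) 1 := by
      apply Set.pi_mono
      intro α _
      apply Set.pi_mono
      intro j _
      have hm : δ ^ (l - ∑ i, ((α.1 i : ℕ))) ≤ 1 := pow_le_one₀ (le_of_lt hδ0) hδ1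
      exact Set.Icc_subset_Icc (by linarith) hm
    have hvolG : volume G = ENNReal.ofReal ((2:ℝ)^(N*n') * δ^(S*n')) := by
      rw [hGdef, volume_pi_pi,
        Finset.prod_congr rfl (fun α _ => by
          rw [vol_box_const _ (by positivity), Fintype.card_fin]),
        ← ENNReal.ofReal_prod_of_nonneg (fun α _ => by positivity)]
      congr 1
      rw [Finset.prod_pow, Finset.prod_mul_distrib, Finset.prod_const, Finset.card_univ,
        Finset.prod_pow_eq_pow_sum, ← hSdef, ← hNdef, mul_pow, ← pow_mul, ← pow_mul]
    have hTeq : ∀ u ∈ G, Tpoly n n' d f u = ENNReal.ofReal ((2*δ)^n) := by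
      intro u hu
      rw [hGdef, Set.mem_univ_pi] at hu
      have hu' : ∀ α j, |u α j| ≤ δ ^ (l - ∑ i, ((α.1 i : ℕ))) := by
        intro α j
        have h2 := hu α
        rw [Set.mem_univ_pi] at h2
        have h3 := h2 j
        rw [Set.mem_Icc] at h3
        rw [abs_le]
        exact ⟨h3.1, h3.2⟩
      have heq : ∀ t : Fin n → ℝ,
          f (t, fun j => ∑ α : MultiIdx n d, u α j * ∏ i, t i ^ ((α.1 i : ℕ)))
            = (Set.pi Set.univ fun _ : Fin n => Set.Icc (-δ) δ).indicator (1 : (Fin n → ℝ) → ℝ≥0∞) t := by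
        intro t
        by_cases ht : t ∈ Set.pi Set.univ fun _ : Fin n => Set.Icc (-δ) δ
        · rw [Set.indicator_of_mem ht, hfdef]
          apply Set.indicator_of_mem
          refine Set.mem_prod.2 ⟨ht, ?_⟩
          rw [Set.mem_univ_pi]
          intro j
          rw [Set.mem_Icc, ← abs_le]
          have ht' : ∀ i, |t i| ≤ δ := by
            intro i
            have := ht i (Set.mem_univ i)
            rw [Set.mem_Icc] at this
            rw [abs_le]
            exact this
          have hb := poly_bound n n' d l δ hδ0 hδ1 u hu' t ht' j
          rw [hBdef]
          exact hb
        · rw [Set.indicator_of_notMem ht, hfdef]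
          apply Set.indicator_of_notMem
          exact fun hmem => ht hmem.1
      show (∫⁻ t : Fin n → ℝ,
          f (t, fun j => ∑ α : MultiIdx n d, u α j * ∏ i, t i ^ ((α.1 i : ℕ)))) = _
      rw [lintegral_congr heq,
        lintegral_indicator_one (MeasurableSet.univ_pi fun _ => measurableSet_Icc),
        vol_box_const _ (le_of_lt hδ0), Fintype.card_fin]
    have hLB : (ENNReal.ofReal ((2*δ)^n))^q * volume G
        ≤ ∫⁻ u in (Set.pi Set.univ fun _ : MultiIdx n d =>
            Set.pi Set.univ fun _ : Fin n' => Set.Icc (-1:ℝ) 1),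
          (Tpoly n n' d f u)^q := by
      calc (ENNReal.ofReal ((2*δ)^n))^q * volume G
          = ∫⁻ _u in G, (ENNReal.ofReal ((2*δ)^n))^q := (setLIntegral_const _ _).symm
        _ = ∫⁻ u in G, (Tpoly n n' d f u)^q := by
            apply setLIntegral_congr_fun hGmeas
            exact (fun u hu => by rw [hTeq u hu])
        _ ≤ _ := lintegral_mono_set hGsub
    have hmain := hC f hfmeas hsupp
    have h5 : ((ENNReal.ofReal ((2*δ)^n))^q * volume G)^(1/q)
        ≤ ENNReal.ofReal (1 ⊔ |C|)
          * (ENNReal.ofReal ((2*δ)^n * (2*(B*δ^l))^n'))^(1/p) := by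
      calc ((ENNReal.ofReal ((2*δ)^n))^q * volume G)^(1/q)
          ≤ (∫⁻ u in (Set.pi Set.univ fun _ : MultiIdx n d =>
              Set.pi Set.univ fun _ : Fin n' => Set.Icc (-1:ℝ) 1),
            (Tpoly n n' d f u)^q)^(1/q) := ENNReal.rpow_le_rpow hLB (by positivity)
        _ ≤ ENNReal.ofReal C * (∫⁻ z, f z ^ p) ^ (1/p) := hmain
        _ = ENNReal.ofReal C * (ENNReal.ofReal ((2*δ)^n * (2*(B*δ^l))^n'))^(1/p) := by
            rw [hRHS]
        _ ≤ ENNReal.ofReal (1 ⊔ |C|)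
            * (ENNReal.ofReal ((2*δ)^n * (2*(B*δ^l))^n'))^(1/p) := by
            gcongr
            exact le_trans (le_abs_self C) (le_max_right _ _)
    rw [hvolG] at h5
    have e1 : (ENNReal.ofReal ((2*δ)^n))^q
        * ENNReal.ofReal ((2:ℝ)^(N*n') * δ^(S*n'))
        = ENNReal.ofReal (((2*δ)^n)^q * ((2:ℝ)^(N*n') * δ^(S*n'))) := by
      rw [ENNReal.ofReal_rpow_of_pos (by positivity), ← ENNReal.ofReal_mul (by positivity)]
    rw [e1, ENNReal.ofReal_rpow_of_pos (by positivity),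
      ENNReal.ofReal_rpow_of_pos (by positivity),
      ← ENNReal.ofReal_mul (by positivity)] at h5
    have h6 := (ENNReal.ofReal_le_ofReal_iff (by positivity)).mp h5
    rw [lhs_form n (N*n') (S*n') q δ (ne_of_gt hq0) hδ0] at h6
    rw [rhs_form n n' l B p δ hB hδ0] at h6
    calc ((2:ℝ)^n * (((2:ℝ)^(N*n'))^(1/q))) * δ^((n:ℝ) + ((S*n' : ℕ) : ℝ)/q)
        ≤ (1 ⊔ |C|) * ((((2:ℝ)^n * (2*B)^n')^(1/p)) * δ^(((n:ℝ) + (l:ℝ)*(n':ℝ))/p)) := h6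
      _ = ((1 ⊔ |C|) * (((2:ℝ)^n * (2*B)^n')^(1/p))) * δ^(((n:ℝ) + (l:ℝ)*(n':ℝ))/p) := by
          ring
  have hc0 : (0:ℝ) < (1 ⊔ |C|) * (((2:ℝ)^n * (2*B)^n')^(1/p)) := by
    apply _root_.mul_pos (lt_of_lt_of_le one_pos le_sup_left)
    exact Real.rpow_pos_of_pos (by positivity) _
  have hfin := exponent_ge (by positivity) hc0 key
  have hcast : ((Nat.choose (n + l) (n + 1) : ℕ) : ℝ) = (S : ℝ) := by
    rw [hS]
  rw [ge_iff_le, hcast]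
  have hpush : (((S*n' : ℕ) : ℝ)) = (S:ℝ) * (n':ℝ) := by push_cast; ring
  rw [hpush] at hfin
  have : (n':ℝ)/q * (S:ℝ) = (S:ℝ) * (n':ℝ)/q := by ring
  linarith
end
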